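/- arXiv:2604.24095 — 7 statements merged into one kernel-verified Lean document; each statement's English description precedes it below -/
import Mathlib

section
/- Let X ⊆ ℤ^d be a finite set of vectors such that the cone generated by X is not equal to the linear span of X. Then there exists a non-zero vector n ∈ ℤ^d such that (1) ⟨n, x⟩ ≥ 0 for all x ∈ X, and (2) letting X₀ = {x ∈ X : ⟨n, x⟩ = 0}, the cone generated by X₀ equals the linear span of X₀. -/
def cone {d : ℕ} (X : Set (Fin d → ℚ)) : Set (Fin d → ℚ) :=
  {y | ∃ (k : ℕ) (c : Fin k → ℚ) (v : Fin k → (Fin d → ℚ)),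
    (∀ i, 0 ≤ c i) ∧ (∀ i, v i ∈ X) ∧ y = ∑ i, c i • v i}

def coeVec {d : ℕ} (v : Fin d → ℤ) : Fin d → ℚ := fun i => (v i : ℚ)

/-!
Farkas' lemma (proved by Fourier–Motzkin elimination: project along one generator onto the
kernel of a functional and induct on the number of generators) shows that whenever `-z` is not in
the cone, some functional nonnegative on `X` is positive at `z`. Summing such functionals gives
an `f ≥ 0` on `X` whose zero set `X₀` is as small as possible. If `cone X₀ ≠ span X₀`, Farkas
yields `m ≥ 0` on `X₀` with `m z > 0` for some `z ∈ X₀`, and `t f + m` for large `t` would be a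
nonnegative functional not vanishing at `z`, contradicting minimality. Finally `f` is scaled
to an integer vector.
-/

open Module PointedCone

namespace Module.Dual

variable {𝕜 M : Type*} [Field 𝕜] [AddCommGroup M] [Module 𝕜 M]

def kerProj (f : Dual 𝕜 M) (a : M) : M →ₗ[𝕜] M :=
  LinearMap.id - (f a)⁻¹ • f.smulRight a

lemma kerProj_apply (f : Dual 𝕜 M) (a x : M) : f.kerProj a x = x - ((f a)⁻¹ * f x) • a := by
  simp [kerProj, mul_smul]

lemma kerProj_self {f : Dual 𝕜 M} {a : M} (ha : f a ≠ 0) : f.kerProj a a = 0 := by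
  simp [kerProj_apply, ha]

end Module.Dual

lemma exists_nonneg_mul_add {𝕜 ι : Type*} [Field 𝕜] [LinearOrder 𝕜] [IsStrictOrderedRing 𝕜]
    (s : Finset ι) {a b : ι → 𝕜}
    (ha : ∀ i ∈ s, 0 ≤ a i) (hb : ∀ i ∈ s, a i = 0 → 0 ≤ b i) :
    ∃ t : 𝕜, ∀ i ∈ s, 0 ≤ t * a i + b i := by
  refine ((Filter.eventually_all_finset s).2 fun i hi => ?_).exists (f := Filter.atTop)
  obtain h | h := (ha i hi).eq_or_lt
  · simp [← h, hb i hi h.symm]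
  · exact (Filter.tendsto_atTop_add_const_right _ _
      (Filter.tendsto_id.atTop_mul_const h)).eventually_ge_atTop 0

namespace PointedCone

lemma hull_eq_span_of_neg_mem {R M : Type*} [Ring R] [LinearOrder R] [IsOrderedRing R]
    [AddCommGroup M] [Module R M] {s : Set M} (h : ∀ x ∈ s, -x ∈ hull R s) :
    hull R s = Submodule.span R s := by
  refine (hull_le_span R s).antisymm ?_
  have : Submodule.span R s ≤ (hull R s).lineal :=
    Submodule.span_le.mpr fun x hx => mem_lineal.mpr ⟨subset_hull hx, h x hx⟩
  exact fun x hx => lineal_le _ (this hx)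

variable {𝕜 M : Type*} [Field 𝕜] [LinearOrder 𝕜] [IsStrictOrderedRing 𝕜]
  [AddCommGroup M] [Module 𝕜 M]

lemma nonneg_of_mem_hull {s : Set M} {f : Dual 𝕜 M} (hf : ∀ x ∈ s, 0 ≤ f x) {y : M}
    (hy : y ∈ hull 𝕜 s) : 0 ≤ f y :=
  (Submodule.span_le (p := (positive 𝕜 𝕜).comap f)).mpr hf hy

lemma mem_hull_insert_of_kerProj_mem {s : Set M} {f : Dual 𝕜 M} {a y : M}
    (hs : ∀ x ∈ s, 0 ≤ f x) (ha : f a < 0) (hy : f y < 0)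
    (h : f.kerProj a y ∈ hull 𝕜 (f.kerProj a '' s)) : y ∈ hull 𝕜 (insert a s) := by
  have hmap : hull 𝕜 (f.kerProj a '' s) = (hull 𝕜 s).map (f.kerProj a) := by
    simp [map, hull, Submodule.map_span]
  obtain ⟨z, hz, hzy⟩ := mem_map.mp (hmap ▸ h)
  have hyz : y = z + ((f a)⁻¹ * (f y - f z)) • a := by
    rw [Dual.kerProj_apply, Dual.kerProj_apply] at hzy
    linear_combination (norm := module) -hzy
  have hcoeff : 0 ≤ (f a)⁻¹ * (f y - f z) :=
    mul_nonneg_of_nonpos_of_nonpos (inv_nonpos.mpr ha.le) (by linarith [nonneg_of_mem_hull hs hz])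
  rw [hyz]
  exact add_mem (Submodule.span_mono (Set.subset_insert a s) hz)
    (smul_mem _ hcoeff (subset_hull (Set.mem_insert a s)))

theorem exists_dual_nonneg_of_notMem_hull (s : Finset M) {y : M}
    (hy : y ∉ hull 𝕜 (s : Set M)) : ∃ f : Dual 𝕜 M, (∀ x ∈ s, 0 ≤ f x) ∧ f y < 0 := by
  classical
  induction h : s.card using Nat.strong_induction_on generalizing s y with
  | _ k ih =>
  obtain rfl | ⟨a, ha⟩ := s.eq_empty_or_nonempty
  · have hy₀ : y ≠ 0 := by rintro rfl; exact hy (zero_mem _)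
    obtain ⟨f, hf⟩ := Projective.exists_dual_eq_one 𝕜 hy₀
    exact ⟨-f, by simp, by simp [hf]⟩
  have hs : (s : Set M) = insert a ↑(s.erase a) := by simp [ha]
  have hcard : (s.erase a).card < k := h ▸ Finset.card_erase_lt_of_mem ha
  obtain ⟨f, hf, hfy⟩ := ih _ hcard (s.erase a)
    (fun h' => hy (Submodule.span_mono (by simp) h')) rfl
  by_cases hfa : 0 ≤ f a
  · refine ⟨f, fun x hx => ?_, hfy⟩
    obtain rfl | hxa := eq_or_ne x a
    exacts [hfa, hf x (Finset.mem_erase.mpr ⟨hxa, hx⟩)]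
  rw [not_le] at hfa
  obtain ⟨g, hg, hgy⟩ := ih _ (Finset.card_image_le.trans_lt hcard)
    ((s.erase a).image (f.kerProj a)) (fun h' => hy <| hs ▸
      mem_hull_insert_of_kerProj_mem hf hfa hfy (by simpa using h')) rfl
  refine ⟨g ∘ₗ f.kerProj a, fun x hx => ?_, hgy⟩
  obtain rfl | hxa := eq_or_ne x a
  · simp [Dual.kerProj_self hfa.ne]
  · exact hg _ (Finset.mem_image_of_mem _ (Finset.mem_erase.mpr ⟨hxa, hx⟩))

lemma exists_dual_nonneg_pos_of_hull_ne_span (s : Finset M)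
    (h : hull 𝕜 (s : Set M) ≠ Submodule.span 𝕜 (s : Set M)) :
    ∃ g : Dual 𝕜 M, (∀ x ∈ s, 0 ≤ g x) ∧ ∃ z ∈ s, 0 < g z := by
  obtain ⟨z, hz, hnz⟩ : ∃ z ∈ s, -z ∉ hull 𝕜 (s : Set M) := by
    by_contra! hneg
    exact h (hull_eq_span_of_neg_mem hneg)
  obtain ⟨g, hg, hgz⟩ := exists_dual_nonneg_of_notMem_hull s hnz
  exact ⟨g, hg, z, hz, by simpa using hgz⟩

lemma exists_dual_nonneg_minimal_zeroSet (s : Finset M) :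
    ∃ f : Dual 𝕜 M, (∀ x ∈ s, 0 ≤ f x) ∧
      ∀ g : Dual 𝕜 M, (∀ x ∈ s, 0 ≤ g x) → ∀ x ∈ s, f x = 0 → g x = 0 := by
  have : ∀ x, ∃ g : Dual 𝕜 M, (∀ y ∈ s, 0 ≤ g y) ∧
      ∀ g' : Dual 𝕜 M, (∀ y ∈ s, 0 ≤ g' y) → 0 < g' x → 0 < g x := by
    intro x
    by_cases h : ∃ g' : Dual 𝕜 M, (∀ y ∈ s, 0 ≤ g' y) ∧ 0 < g' x
    · obtain ⟨g', hg', hx⟩ := h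
      exact ⟨g', hg', fun _ _ _ => hx⟩
    · exact ⟨0, by simp, fun g' hg' hx => (h ⟨g', hg', hx⟩).elim⟩
  choose g hg hpos using this
  refine ⟨∑ x ∈ s, g x, fun y hy => ?_, fun g' hg' x hx hfx => ?_⟩
  · simpa using Finset.sum_nonneg fun x _ => hg x y hy
  · by_contra hne
    have hgx : 0 < g x x := hpos x g' hg' ((hg' x hx).lt_of_ne (Ne.symm hne))
    have : g x x ≤ ∑ y ∈ s, g y x := Finset.single_le_sum (fun y _ => hg y x hx) hx
    rw [LinearMap.sum_apply] at hfx
    linarith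

theorem exists_dual_nonneg_hull_zeroSet_eq_span (s : Finset M)
    (h : hull 𝕜 (s : Set M) ≠ Submodule.span 𝕜 (s : Set M)) :
    ∃ f : Dual 𝕜 M, f ≠ 0 ∧ (∀ x ∈ s, 0 ≤ f x) ∧
      hull 𝕜 {x ∈ (s : Set M) | f x = 0} = Submodule.span 𝕜 {x ∈ (s : Set M) | f x = 0} := by
  classical
  obtain ⟨f, hf, hmin⟩ := exists_dual_nonneg_minimal_zeroSet (𝕜 := 𝕜) s
  refine ⟨f, ?_, hf, ?_⟩
  · rintro rfl
    obtain ⟨g, hg, z, hz, hgz⟩ := exists_dual_nonneg_pos_of_hull_ne_span s h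
    exact hgz.ne' (hmin g hg z hz rfl)
  · by_contra h₀
    obtain ⟨m, hm, z, hz, hmz⟩ :=
      exists_dual_nonneg_pos_of_hull_ne_span (s.filter (f · = 0)) (by rwa [Finset.coe_filter])
    rw [Finset.mem_filter] at hz
    obtain ⟨t, ht⟩ := exists_nonneg_mul_add s hf
      fun x hx hfx => hm x (Finset.mem_filter.mpr ⟨hx, hfx⟩)
    have := hmin (t • f + m) (fun x hx => by simpa using ht x hx) z hz.1 hz.2
    simp only [LinearMap.add_apply, LinearMap.smul_apply, hz.2, smul_zero, zero_add] at this
    exact hmz.ne' this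

end PointedCone

lemma cone_eq_hull {d : ℕ} (S : Set (Fin d → ℚ)) : cone S = hull ℚ S := by
  ext y
  rw [SetLike.mem_coe, Submodule.mem_span_set']
  constructor
  · rintro ⟨k, c, v, hc, hv, rfl⟩
    exact ⟨k, fun i => ⟨c i, hc i⟩, fun i => ⟨v i, hv i⟩, rfl⟩
  · rintro ⟨k, c, v, rfl⟩
    exact ⟨k, fun i => c i, fun i => v i, fun i => (c i).2, fun i => (v i).2, rfl⟩

lemma exists_pos_smul_eq_coeVec {d : ℕ} (v : Fin d → ℚ) :
    ∃ (N : ℚ) (n : Fin d → ℤ), 0 < N ∧ coeVec n = N • v := by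
  set D := ∏ i, (v i).den
  refine ⟨D, fun i => (v i).num * (D / (v i).den : ℕ), by positivity, funext fun i => ?_⟩
  have hden : (v i).den ∣ D := Finset.dvd_prod_of_mem _ (Finset.mem_univ i)
  have hden₀ : ((v i).den : ℚ) ≠ 0 := by exact_mod_cast (v i).den_nz
  simp only [coeVec, Int.cast_mul, Int.cast_natCast, Nat.cast_div hden hden₀, Pi.smul_apply,
    smul_eq_mul]
  rw [mul_div_assoc', mul_comm ((v i).num : ℚ), mul_div_assoc, Rat.num_div_den]

lemma intCast_sum_mul_eq_dotProduct {d : ℕ} (n x : Fin d → ℤ) :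
    ((∑ i, n i * x i : ℤ) : ℚ) = coeVec n ⬝ᵥ coeVec x := by
  simp [dotProduct, coeVec]

lemma exists_intVec_sum_mul_eq {d : ℕ} {f : Dual ℚ (Fin d → ℚ)} (hf : f ≠ 0) :
    ∃ (N : ℚ) (n : Fin d → ℤ), 0 < N ∧ n ≠ 0 ∧
      ∀ x : Fin d → ℤ, ((∑ i, n i * x i : ℤ) : ℚ) = N * f (coeVec x) := by
  set v := (dotProductEquiv ℚ (Fin d)).symm f
  have hfv : f = dotProductEquiv ℚ (Fin d) v := by simp [v]
  obtain ⟨N, n, hN, hn⟩ := exists_pos_smul_eq_coeVec v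
  refine ⟨N, n, hN, ?_, fun x => ?_⟩
  · rintro rfl
    have hv : v = 0 := (smul_eq_zero.mp (hn.symm.trans (by ext; simp [coeVec]))).resolve_left hN.ne'
    exact hf (by rw [hfv, hv, map_zero])
  · rw [intCast_sum_mul_eq_dotProduct, hn, smul_dotProduct, hfv]
    rfl

theorem stmt0 (d : ℕ) (X : Finset (Fin d → ℤ))
    (h : cone (coeVec '' (X : Set (Fin d → ℤ)))
        ≠ (Submodule.span ℚ (coeVec '' (X : Set (Fin d → ℤ))) : Set (Fin d → ℚ))) :
    ∃ n : Fin d → ℤ, n ≠ 0 ∧ (∀ x ∈ X, 0 ≤ ∑ i, n i * x i) ∧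
      cone (coeVec '' {x : Fin d → ℤ | x ∈ X ∧ ∑ i, n i * x i = 0})
        = (Submodule.span ℚ (coeVec '' {x : Fin d → ℤ | x ∈ X ∧ ∑ i, n i * x i = 0}) :
            Set (Fin d → ℚ)) := by
  classical
  rw [cone_eq_hull, ← Finset.coe_image] at h
  obtain ⟨f, hf₀, hf, hzero⟩ :=
    exists_dual_nonneg_hull_zeroSet_eq_span (X.image coeVec) fun e => h (congrArg _ e)
  obtain ⟨N, n, hN, hn₀, hdot⟩ := exists_intVec_sum_mul_eq hf₀
  have hiff : ∀ x, ∑ i, n i * x i = 0 ↔ f (coeVec x) = 0 := fun x => by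
    rw [← Int.cast_inj (α := ℚ), hdot, Int.cast_zero, mul_eq_zero, or_iff_right hN.ne']
  have hzeroSet : coeVec '' {x | x ∈ X ∧ ∑ i, n i * x i = 0}
      = {y ∈ ((X.image coeVec : Finset _) : Set (Fin d → ℚ)) | f y = 0} := by
    simp_rw [hiff, Finset.coe_image]
    exact Set.image_inter_preimage coeVec _ {y | f y = 0}
  refine ⟨n, hn₀, fun x hx => ?_, ?_⟩
  · exact_mod_cast (hdot x).symm ▸ mul_nonneg hN.le (hf _ (Finset.mem_image_of_mem coeVec hx))
  · rw [hzeroSet, cone_eq_hull, hzero]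
    rfl
end

section
/- Let X ⊆ ℚ^d be a 2-dimensional vector space with X = span{u,v} = span{x,y}. Then X is projective with respect to the base u, v if and only if X is projective with respect to the base x, y. In other words, projectiveness of a 2-dimensional subspace is independent of the choice of basis. -/
def projective {d : ℕ} (u v : Fin d → ℚ) : Prop :=
  ∃ i j : Fin d,
    cone (Set.range (fun ℓ => ![u ℓ, v ℓ])) = cone ({![u i, v i], ![u j, v j]} : Set (Fin 2 → ℚ))

def lmap (a b c e : ℚ) : (Fin 2 → ℚ) →ₗ[ℚ] (Fin 2 → ℚ) where
  toFun w := ![a * w 0 + b * w 1, c * w 0 + e * w 1]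
  map_add' w z := by funext i; fin_cases i <;> simp <;> ring
  map_smul' r w := by funext i; fin_cases i <;> simp <;> ring

lemma cone_image {n : ℕ} (f : (Fin n → ℚ) →ₗ[ℚ] (Fin n → ℚ)) (S : Set (Fin n → ℚ)) :
    cone (f '' S) = f '' cone S := by
  ext z
  constructor
  · rintro ⟨k, c, w, hc, hw, rfl⟩
    choose g hg hfg using hw
    refine ⟨∑ i, c i • g i, ⟨k, c, g, hc, hg, rfl⟩, ?_⟩
    simp [map_sum, map_smul, hfg]
  · rintro ⟨z, ⟨k, c, w, hc, hw, rfl⟩, rfl⟩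
    exact ⟨k, c, fun i => f (w i), hc, fun i => ⟨w i, hw i, rfl⟩,
      by simp [map_sum, map_smul]⟩

lemma projective_mono {d : ℕ} (u v x y : Fin d → ℚ) (a b c e : ℚ)
    (hx : ∀ ℓ, x ℓ = a * u ℓ + b * v ℓ) (hy : ∀ ℓ, y ℓ = c * u ℓ + e * v ℓ)
    (h : projective u v) : projective x y := by
  obtain ⟨i, j, h⟩ := h
  refine ⟨i, j, ?_⟩
  have key : ∀ ℓ, (lmap a b c e) ![u ℓ, v ℓ] = ![x ℓ, y ℓ] := by
    intro ℓ
    funext k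
    fin_cases k <;> simp [lmap, hx, hy]
  have h1 : (Set.range fun ℓ => ![x ℓ, y ℓ])
      = (lmap a b c e) '' Set.range (fun ℓ => ![u ℓ, v ℓ]) := by
    rw [← Set.range_comp]
    apply congrArg
    funext ℓ
    exact (key ℓ).symm
  have h2 : ({![x i, y i], ![x j, y j]} : Set (Fin 2 → ℚ))
      = (lmap a b c e) '' ({![u i, v i], ![u j, v j]} : Set (Fin 2 → ℚ)) := by
    rw [Set.image_insert_eq, Set.image_singleton, key, key]
  rw [h1, h2, cone_image, cone_image, h]

theorem stmt3 (d : ℕ) (u v x y : Fin d → ℚ)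
    (huv : LinearIndependent ℚ ![u, v]) (hxy : LinearIndependent ℚ ![x, y])
    (hspan : Submodule.span ℚ ({u, v} : Set (Fin d → ℚ))
           = Submodule.span ℚ ({x, y} : Set (Fin d → ℚ))) :
    projective u v ↔ projective x y := by
  have hx : x ∈ Submodule.span ℚ ({u, v} : Set (Fin d → ℚ)) := by
    rw [hspan]; exact Submodule.subset_span (by simp)
  have hy : y ∈ Submodule.span ℚ ({u, v} : Set (Fin d → ℚ)) := by
    rw [hspan]; exact Submodule.subset_span (by simp)
  have hu : u ∈ Submodule.span ℚ ({x, y} : Set (Fin d → ℚ)) := by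
    rw [← hspan]; exact Submodule.subset_span (by simp)
  have hv : v ∈ Submodule.span ℚ ({x, y} : Set (Fin d → ℚ)) := by
    rw [← hspan]; exact Submodule.subset_span (by simp)
  obtain ⟨a, b, hab⟩ := Submodule.mem_span_pair.mp hx
  obtain ⟨c, e, hce⟩ := Submodule.mem_span_pair.mp hy
  obtain ⟨a', b', hab'⟩ := Submodule.mem_span_pair.mp hu
  obtain ⟨c', e', hce'⟩ := Submodule.mem_span_pair.mp hv
  constructor
  · exact projective_mono u v x y a b c e
      (fun ℓ => by have := congrFun hab ℓ; simpa [eq_comm] using this.symm)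
      (fun ℓ => by have := congrFun hce ℓ; simpa [eq_comm] using this.symm)
  · exact projective_mono x y u v a' b' c' e'
      (fun ℓ => by have := congrFun hab' ℓ; simpa [eq_comm] using this.symm)
      (fun ℓ => by have := congrFun hce' ℓ; simpa [eq_comm] using this.symm)
end

section
/- Let X ⊆ ℚ^d be a projective 2-dimensional vector space. Then there exists a sign-reflecting projection of X, i.e., a set I ⊆ [d] with |I| = 2 such that for every x ∈ X, if x(i) ≥ 0 for all i ∈ I, then x(ℓ) ≥ 0 for all ℓ ∈ [d]. -/
lemma cone_pair {n : ℕ} (p q y : Fin n → ℚ) (h : y ∈ cone ({p, q} : Set (Fin n → ℚ))) :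
    ∃ α β : ℚ, 0 ≤ α ∧ 0 ≤ β ∧ y = α • p + β • q := by
  obtain ⟨k, c, vf, hc, hv, rfl⟩ := h
  refine ⟨∑ i, if vf i = p then c i else 0, ∑ i, if vf i = p then 0 else c i, ?_, ?_, ?_⟩
  · exact Finset.sum_nonneg fun i _ => by split <;> simp [hc i]
  · exact Finset.sum_nonneg fun i _ => by split <;> simp [hc i]
  · rw [Finset.sum_smul, Finset.sum_smul, ← Finset.sum_add_distrib]
    refine Finset.sum_congr rfl fun i _ => ?_
    by_cases hip : vf i = p
    · simp [hip]
    · have hq : vf i = q := (hv i).resolve_left hip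
      rw [hq]; by_cases hqp : q = p <;> simp [hqp]

lemma self_mem_cone_range {d : ℕ} (u v : Fin d → ℚ) (ℓ : Fin d) :
    ![u ℓ, v ℓ] ∈ cone (Set.range (fun ℓ => ![u ℓ, v ℓ])) := by
  exact ⟨1, fun _ => 1, fun _ => ![u ℓ, v ℓ], fun _ => zero_le_one, fun _ => ⟨ℓ, rfl⟩, by simp⟩

theorem stmt4 (d : ℕ) (u v : Fin d → ℚ) (huv : LinearIndependent ℚ ![u, v])
    (hproj : projective u v) :
    ∃ i j : Fin d, i ≠ j ∧ ∀ w : Fin d → ℚ,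
      w ∈ Submodule.span ℚ ({u, v} : Set (Fin d → ℚ)) →
      0 ≤ w i → 0 ≤ w j → ∀ ℓ, 0 ≤ w ℓ := by
  obtain ⟨i, j, hij⟩ := hproj
  have key : ∀ ℓ : Fin d, ∃ α β : ℚ, 0 ≤ α ∧ 0 ≤ β ∧
      u ℓ = α * u i + β * u j ∧ v ℓ = α * v i + β * v j := by
    intro ℓ
    have h := self_mem_cone_range u v ℓ
    rw [hij] at h
    obtain ⟨α, β, hα, hβ, hy⟩ := cone_pair _ _ _ h
    refine ⟨α, β, hα, hβ, ?_, ?_⟩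
    · have := congrFun hy 0; simpa using this
    · have := congrFun hy 1; simpa using this
  by_cases hne : i = j
  · exfalso
    subst hne
    -- all rows are multiples of row i; contradicts linear independence
    have hw : (v i) • u - (u i) • v = 0 := by
      funext ℓ
      obtain ⟨α, β, _, _, hu, hv⟩ := key ℓ
      simp only [Pi.sub_apply, Pi.smul_apply, smul_eq_mul, Pi.zero_apply, hu, hv]
      ring
    have h2 := Fintype.linearIndependent_iff.mp huv ![v i, -(u i)]
    have hsum : ∑ k : Fin 2, (![v i, -(u i)] k) • (![u, v] k) = 0 := by
      rw [Fin.sum_univ_two]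
      simp only [Matrix.cons_val_zero, Matrix.cons_val_one, Matrix.head_cons]
      rw [neg_smul, ← sub_eq_add_neg]
      exact hw
    have hvi : v i = 0 := by simpa using h2 hsum 0
    have hui : u i = 0 := by have := h2 hsum 1; simpa using this
    have hu0 : u = 0 := by
      funext ℓ
      obtain ⟨α, β, _, _, hu, _⟩ := key ℓ
      simp [hu, hui]
    have h3 := Fintype.linearIndependent_iff.mp huv ![1, 0]
    have hsum2 : ∑ k : Fin 2, (![(1:ℚ), 0] k) • (![u, v] k) = 0 := by
      rw [Fin.sum_univ_two]; simp [hu0]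
    have : (1:ℚ) = 0 := by simpa using h3 hsum2 0
    norm_num at this
  · refine ⟨i, j, hne, fun w hw hwi hwj ℓ => ?_⟩
    obtain ⟨a, b, hab⟩ := Submodule.mem_span_pair.mp hw
    obtain ⟨α, β, hα, hβ, hu, hv⟩ := key ℓ
    have hwℓ : w ℓ = α * w i + β * w j := by
      have h0 := congrFun hab ℓ
      have h1 := congrFun hab i
      have h2 := congrFun hab j
      simp only [Pi.add_apply, Pi.smul_apply, smul_eq_mul] at h0 h1 h2
      rw [← h0, ← h1, ← h2, hu, hv]
      ring
    rw [hwℓ]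
    positivity
end

section
/- Let X = span(u, v) ⊆ ℚ^d be a 2-dimensional vector space that is not projective, where u, v ∈ ℤ^d, and let M := max(‖u‖, ‖v‖) in max norm. Then there exists a non-zero vector n ∈ ℕ^d such that ⟨x, n⟩ = 0 for all x ∈ X, ‖n‖ ≤ 2M², the support of n has size at most 3, and supp(n) ⊆ supp(X). -/
namespace S5

def cone2 (a b : Fin 2 → ℚ) : Set (Fin 2 → ℚ) :=
  {x | ∃ s t : ℚ, 0 ≤ s ∧ 0 ≤ t ∧ x = s • a + t • b}

lemma c2_zero (a b : Fin 2 → ℚ) : (0 : Fin 2 → ℚ) ∈ cone2 a b :=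
  ⟨0, 0, le_refl _, le_refl _, by simp⟩

lemma c2_left (a b : Fin 2 → ℚ) : a ∈ cone2 a b :=
  ⟨1, 0, zero_le_one, le_refl _, by simp⟩

lemma c2_right (a b : Fin 2 → ℚ) : b ∈ cone2 a b :=
  ⟨0, 1, le_refl _, zero_le_one, by simp⟩

lemma c2_smul {a b x : Fin 2 → ℚ} {c : ℚ} (hc : 0 ≤ c) (hx : x ∈ cone2 a b) :
    c • x ∈ cone2 a b := by
  obtain ⟨s, t, hs, ht, rfl⟩ := hx
  exact ⟨c * s, c * t, mul_nonneg hc hs, mul_nonneg hc ht, by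
    simp [smul_add, smul_smul]⟩

lemma c2_add {a b x y : Fin 2 → ℚ} (hx : x ∈ cone2 a b) (hy : y ∈ cone2 a b) :
    x + y ∈ cone2 a b := by
  obtain ⟨s, t, hs, ht, rfl⟩ := hx
  obtain ⟨s', t', hs', ht', rfl⟩ := hy
  exact ⟨s + s', t + t', by linarith, by linarith, by
    simp [add_smul]; abel⟩

lemma c2_sum {a b : Fin 2 → ℚ} {k : ℕ} {c : Fin k → ℚ} {w : Fin k → (Fin 2 → ℚ)}
    (hc : ∀ i, 0 ≤ c i) (hw : ∀ i, w i ∈ cone2 a b) :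
    ∑ i, c i • w i ∈ cone2 a b := by
  classical
  refine Finset.sum_induction _ (fun x => x ∈ cone2 a b) (fun x y hx hy => c2_add hx hy)
    (c2_zero a b) (fun i _ => c2_smul (hc i) (hw i))

lemma cone_subset_c2 {a b : Fin 2 → ℚ} {S : Set (Fin 2 → ℚ)}
    (h : ∀ x ∈ S, x ∈ cone2 a b) : cone S ⊆ cone2 a b := by
  rintro y ⟨k, c, w, hc, hw, rfl⟩
  exact c2_sum hc (fun i => h _ (hw i))

lemma c2_subset_cone {a b : Fin 2 → ℚ} {S : Set (Fin 2 → ℚ)}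
    (ha : a ∈ S) (hb : b ∈ S) : cone2 a b ⊆ cone S := by
  rintro x ⟨s, t, hs, ht, rfl⟩
  refine ⟨2, ![s, t], ![a, b], ?_, ?_, ?_⟩
  · intro i; fin_cases i <;> simpa
  · intro i; fin_cases i <;> simpa
  · simp [Fin.sum_univ_two]

lemma c2_trans {a b p q x : Fin 2 → ℚ} (hx : x ∈ cone2 a b)
    (ha : a ∈ cone2 p q) (hb : b ∈ cone2 p q) : x ∈ cone2 p q := by
  obtain ⟨s, t, hs, ht, rfl⟩ := hx
  exact c2_add (c2_smul hs ha) (c2_smul ht hb)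

end S5
namespace S5

def cross (a b : Fin 2 → ℚ) : ℚ := a 0 * b 1 - a 1 * b 0

lemma vec_eq_zero {a : Fin 2 → ℚ} (h0 : a 0 = 0) (h1 : a 1 = 0) : a = 0 := by
  funext i; fin_cases i <;> simpa

lemma colin {a b : Fin 2 → ℚ} (h : cross a b = 0) (ha : a ≠ 0) :
    ∃ l : ℚ, b = l • a := by
  unfold cross at h
  by_cases h0 : a 0 = 0
  · have h1 : a 1 ≠ 0 := fun h1 => ha (vec_eq_zero h0 h1)
    rw [h0] at h
    have hb0 : b 0 = 0 := by
      rcases mul_eq_zero.1 (by linarith : a 1 * b 0 = 0) with h' | h'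
      · exact absurd h' h1
      · exact h'
    refine ⟨b 1 / a 1, ?_⟩
    funext i; fin_cases i
    · show b 0 = b 1 / a 1 * a 0
      rw [h0, hb0]; ring
    · show b 1 = b 1 / a 1 * a 1
      field_simp
  · refine ⟨b 0 / a 0, ?_⟩
    funext i; fin_cases i
    · show b 0 = b 0 / a 0 * a 0
      field_simp
    · show b 1 = b 0 / a 0 * a 1
      field_simp
      linarith

lemma cramer (a b c : Fin 2 → ℚ) (hD : cross a b ≠ 0) :
    c = (cross c b / cross a b) • a + (cross a c / cross a b) • b := by
  funext i; fin_cases i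
  · show c 0 = cross c b / cross a b * a 0 + cross a c / cross a b * b 0
    field_simp
    unfold cross
    ring
  · show c 1 = cross c b / cross a b * a 1 + cross a c / cross a b * b 1
    field_simp
    unfold cross
    ring

lemma lemA (a b c : Fin 2 → ℚ) (ha : a ≠ 0) :
    (∃ s t w : ℚ, 0 ≤ s ∧ 0 ≤ t ∧ 0 ≤ w ∧ s • a + t • b + w • c = 0 ∧
      ¬(s = 0 ∧ t = 0 ∧ w = 0)) ∨
    c ∈ cone2 a b ∨ a ∈ cone2 b c ∨ b ∈ cone2 a c := by
  by_cases hD : cross a b = 0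
  · obtain ⟨l, rfl⟩ := colin hD ha
    rcases le_or_gt 0 l with hl | hl
    · right; right; right
      exact ⟨l, 0, hl, le_refl _, by simp⟩
    · left
      refine ⟨-l, 1, 0, by linarith, zero_le_one, le_refl _, by module,
        fun h => absurd h.2.1 one_ne_zero⟩
  · have hc := cramer a b c hD
    set s := cross c b / cross a b with hs_def
    set t := cross a c / cross a b with ht_def
    rcases le_or_gt 0 s with hs | hs <;> rcases le_or_gt 0 t with ht | ht
    · right; left; exact ⟨s, t, hs, ht, hc⟩
    · rcases eq_or_lt_of_le hs with hs0 | hs0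
      · left
        refine ⟨0, -t, 1, le_refl _, by linarith, zero_le_one, ?_,
          fun h => absurd h.2.2 one_ne_zero⟩
        rw [hc, ← hs0]
        module
      · right; right; left
        have hs' : s ≠ 0 := ne_of_gt hs0
        refine ⟨-t / s, 1 / s, le_of_lt (div_pos (by linarith) hs0),
          le_of_lt (by simp [one_div_pos, hs0] : (0:ℚ) < 1 / s), ?_⟩
        rw [hc]
        funext i
        simp only [Pi.add_apply, Pi.smul_apply, smul_eq_mul]
        field_simp
        ring
    · rcases eq_or_lt_of_le ht with ht0 | ht0
      · left
        refine ⟨-s, 0, 1, by linarith, le_refl _, zero_le_one, ?_,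
          fun h => absurd h.2.2 one_ne_zero⟩
        rw [hc, ← ht0]
        module
      · right; right; right
        have ht' : t ≠ 0 := ne_of_gt ht0
        refine ⟨-s / t, 1 / t, le_of_lt (div_pos (by linarith) ht0),
          le_of_lt (by simp [one_div_pos, ht0] : (0:ℚ) < 1 / t), ?_⟩
        rw [hc]
        funext i
        simp only [Pi.add_apply, Pi.smul_apply, smul_eq_mul]
        field_simp
        ring
    · left
      refine ⟨-s, -t, 1, by linarith, by linarith, zero_le_one, ?_,
        fun h => absurd h.2.2 one_ne_zero⟩
      rw [hc]
      module

end S5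
namespace S5

def rows {d : ℕ} (u v : Fin d → ℤ) : Fin d → (Fin 2 → ℚ) :=
  fun ℓ => ![((u ℓ : ℚ)), ((v ℓ : ℚ))]

def Goal (d : ℕ) (u v : Fin d → ℤ) (M : ℤ) : Prop :=
  ∃ n : Fin d → ℕ, n ≠ 0 ∧
    (∀ w ∈ Submodule.span ℚ ({coeVec u, coeVec v} : Set (Fin d → ℚ)),
      ∑ i, (n i : ℚ) * w i = 0) ∧
    (∀ i, (n i : ℤ) ≤ 2 * M ^ 2) ∧
    (Finset.univ.filter (fun i => n i ≠ 0)).card ≤ 3 ∧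
    (∀ i, n i ≠ 0 →
      ∃ w ∈ Submodule.span ℚ ({coeVec u, coeVec v} : Set (Fin d → ℚ)), w i ≠ 0)

lemma goal_of {d : ℕ} {u v : Fin d → ℤ} {M : ℤ} (n : Fin d → ℕ)
    (hn0 : n ≠ 0)
    (hU : ∑ i, (n i : ℚ) * (u i : ℚ) = 0)
    (hV : ∑ i, (n i : ℚ) * (v i : ℚ) = 0)
    (hb : ∀ i, (n i : ℤ) ≤ 2 * M ^ 2)
    (hcard : (Finset.univ.filter (fun i => n i ≠ 0)).card ≤ 3)
    (hsupp : ∀ i, n i ≠ 0 → u i ≠ 0 ∨ v i ≠ 0) :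
    Goal d u v M := by
  classical
  refine ⟨n, hn0, ?_, hb, hcard, ?_⟩
  · intro w hw
    let L : (Fin d → ℚ) →ₗ[ℚ] ℚ :=
      { toFun := fun w => ∑ i, (n i : ℚ) * w i
        map_add' := by
          intro x y
          simp [Pi.add_apply, mul_add, Finset.sum_add_distrib]
        map_smul' := by
          intro c x
          simp [Pi.smul_apply, smul_eq_mul, Finset.mul_sum, mul_left_comm] }
    have hle : Submodule.span ℚ ({coeVec u, coeVec v} : Set (Fin d → ℚ)) ≤ LinearMap.ker L := by
      rw [Submodule.span_le]
      rintro x (rfl | rfl)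
      · exact hU
      · exact hV
    exact hle hw
  · intro i hni
    rcases hsupp i hni with h | h
    · exact ⟨coeVec u, Submodule.subset_span (Set.mem_insert _ _),
        by simpa [coeVec] using h⟩
    · exact ⟨coeVec v, Submodule.subset_span (Set.mem_insert_iff.2 (Or.inr rfl)),
        by simpa [coeVec] using h⟩

lemma sum_two {α : Type*} [Fintype α] [DecidableEq α] {p q : α} (hpq : p ≠ q) (f : α → ℚ)
    (hf : ∀ i, i ≠ p → i ≠ q → f i = 0) : ∑ i, f i = f p + f q := by
  rw [← Finset.sum_subset (Finset.subset_univ ({p, q} : Finset α))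
      (fun x _ hx => hf x (fun h => hx (by simp [h])) (fun h => hx (by simp [h])))]
  exact Finset.sum_pair hpq

lemma sum_three {α : Type*} [Fintype α] [DecidableEq α] {p q r : α}
    (hpq : p ≠ q) (hpr : p ≠ r) (hqr : q ≠ r) (f : α → ℚ)
    (hf : ∀ i, i ≠ p → i ≠ q → i ≠ r → f i = 0) : ∑ i, f i = f p + f q + f r := by
  rw [← Finset.sum_subset (Finset.subset_univ ({p, q, r} : Finset α))
      (fun x _ hx => hf x (fun h => hx (by simp [h])) (fun h => hx (by simp [h]))
        (fun h => hx (by simp [h])))]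
  rw [Finset.sum_insert (by simp [hpq, hpr]), Finset.sum_pair hqr]
  ring

lemma det_bound {a b c e M : ℤ} (ha : |a| ≤ M) (hb : |b| ≤ M) (hc : |c| ≤ M)
    (he : |e| ≤ M) : |a * b - c * e| ≤ 2 * M ^ 2 := by
  have hM : 0 ≤ M := le_trans (abs_nonneg a) ha
  have h1 : |a * b| ≤ M * M := by
    rw [abs_mul]; exact mul_le_mul ha hb (abs_nonneg _) hM
  have h2 : |c * e| ≤ M * M := by
    rw [abs_mul]; exact mul_le_mul hc he (abs_nonneg _) hM
  have h3 := abs_add_le (a * b) (-(c * e))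
  rw [abs_neg] at h3
  have h4 : a * b - c * e = a * b + -(c * e) := by ring
  rw [h4]
  nlinarith

lemma pairGoal {d : ℕ} {u v : Fin d → ℤ} {M : ℤ}
    (hu : ∀ i, |u i| ≤ M) (hv : ∀ i, |v i| ≤ M) (hM : 1 ≤ M)
    {p q : Fin d} (hpq : p ≠ q) {l : ℚ} (hl : l < 0)
    (huq : (u q : ℚ) = l * (u p : ℚ)) (hvq : (v q : ℚ) = l * (v p : ℚ))
    (hq0 : u q ≠ 0 ∨ v q ≠ 0) :
    Goal d u v M := by
  classical
  have hp0 : u p ≠ 0 ∨ v p ≠ 0 := by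
    rcases hq0 with h | h
    · left; intro hup
      rw [hup] at huq; simp at huq; exact h (by exact_mod_cast huq)
    · right; intro hvp
      rw [hvp] at hvq; simp at hvq; exact h (by exact_mod_cast hvq)
  set n : Fin d → ℕ := fun ℓ =>
    if ℓ = p then (u q).natAbs + (v q).natAbs
    else if ℓ = q then (u p).natAbs + (v p).natAbs else 0 with hn
  have hnp : n p = (u q).natAbs + (v q).natAbs := by simp [hn]
  have hnq : n q = (u p).natAbs + (v p).natAbs := by simp [hn, hpq.symm, Ne.symm hpq]
  have hn0 : ∀ ℓ, ℓ ≠ p → ℓ ≠ q → n ℓ = 0 := by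
    intro ℓ h1 h2; simp [hn, h1, h2]
  have castAbs : ∀ x : ℤ, ((x.natAbs : ℚ)) = |(x : ℚ)| := by
    intro x; rw [Nat.cast_natAbs]; push_cast; ring
  have key : ∀ x y : ℤ, (x : ℚ) = l * (y : ℚ) → False → True := fun _ _ _ _ => trivial
  have mainU : (n p : ℚ) * (u p : ℚ) + (n q : ℚ) * (u q : ℚ) = 0 := by
    rw [hnp, hnq]
    push_cast
    rw [castAbs, castAbs, castAbs, castAbs, huq, hvq, abs_mul, abs_mul, abs_of_neg hl]
    ring
  have mainV : (n p : ℚ) * (v p : ℚ) + (n q : ℚ) * (v q : ℚ) = 0 := by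
    rw [hnp, hnq]
    push_cast
    rw [castAbs, castAbs, castAbs, castAbs, huq, hvq, abs_mul, abs_mul, abs_of_neg hl]
    ring
  refine goal_of n ?_ ?_ ?_ ?_ ?_ ?_
  · intro h
    have : n p = 0 := by rw [h]; rfl
    rw [hnp] at this
    rcases hq0 with h' | h'
    · exact h' (Int.natAbs_eq_zero.1 (by omega))
    · exact h' (Int.natAbs_eq_zero.1 (by omega))
  · rw [sum_two hpq _ (fun i h1 h2 => by rw [hn0 i h1 h2]; simp)]
    exact mainU
  · rw [sum_two hpq _ (fun i h1 h2 => by rw [hn0 i h1 h2]; simp)]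
    exact mainV
  · intro i
    have h2M : (2 : ℤ) * M ≤ 2 * M ^ 2 := by nlinarith
    by_cases h1 : i = p
    · subst h1; rw [hnp]; push_cast
      linarith [hu q, hv q, h2M]
    · by_cases h2 : i = q
      · subst h2; rw [hnq]; push_cast
        linarith [hu p, hv p, h2M]
      · rw [hn0 i h1 h2]; positivity
  · have hsub : Finset.univ.filter (fun i => n i ≠ 0) ⊆ ({p, q} : Finset (Fin d)) := by
      intro x hx
      simp only [Finset.mem_filter, Finset.mem_univ, true_and] at hx
      by_contra hmem
      simp only [Finset.mem_insert, Finset.mem_singleton] at hmem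
      push_neg at hmem
      exact hx (hn0 x hmem.1 hmem.2)
    refine le_trans (Finset.card_le_card hsub) ?_
    refine le_trans (Finset.card_insert_le _ _) ?_
    simp
  · intro i hni
    by_cases h1 : i = p
    · subst h1; exact hp0
    · by_cases h2 : i = q
      · subst h2; exact hq0
      · exact absurd (hn0 i h1 h2) hni

end S5
namespace S5

lemma rows_eq_zero_iff {d : ℕ} {u v : Fin d → ℤ} {ℓ : Fin d} :
    rows u v ℓ = 0 ↔ (u ℓ = 0 ∧ v ℓ = 0) := by
  constructor
  · intro h
    constructor
    · have h0 := congrFun h 0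
      simp [rows] at h0
      exact_mod_cast h0
    · have h1 := congrFun h 1
      simp [rows] at h1
      exact_mod_cast h1
  · rintro ⟨h1, h2⟩
    apply vec_eq_zero <;> simp [rows, h1, h2]

lemma tripleGoal {d : ℕ} {u v : Fin d → ℤ} {M : ℤ}
    (hu : ∀ i, |u i| ≤ M) (hv : ∀ i, |v i| ≤ M) (hM : 1 ≤ M)
    {p q r : Fin d} (hpq : p ≠ q) (hpr : p ≠ r) (hqr : q ≠ r)
    (hsign : (0 < u q * v r - u r * v q ∧ 0 < u r * v p - u p * v r ∧
                0 < u p * v q - u q * v p)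
           ∨ (u q * v r - u r * v q < 0 ∧ u r * v p - u p * v r < 0 ∧
                u p * v q - u q * v p < 0)) :
    Goal d u v M := by
  classical
  set Dp : ℤ := u q * v r - u r * v q with hDp
  set Dq : ℤ := u r * v p - u p * v r with hDq
  set Dr : ℤ := u p * v q - u q * v p with hDr
  set n : Fin d → ℕ := fun ℓ =>
    if ℓ = p then Dp.natAbs else if ℓ = q then Dq.natAbs
    else if ℓ = r then Dr.natAbs else 0 with hn
  have hnp : n p = Dp.natAbs := by simp [hn]
  have hnq : n q = Dq.natAbs := by simp [hn, Ne.symm hpq]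
  have hnr : n r = Dr.natAbs := by simp [hn, Ne.symm hpr, Ne.symm hqr]
  have hn0 : ∀ ℓ, ℓ ≠ p → ℓ ≠ q → ℓ ≠ r → n ℓ = 0 := by
    intro ℓ h1 h2 h3; simp [hn, h1, h2, h3]
  have absU : (Dp.natAbs : ℤ) * u p + (Dq.natAbs : ℤ) * u q + (Dr.natAbs : ℤ) * u r = 0 := by
    rw [Int.natCast_natAbs, Int.natCast_natAbs, Int.natCast_natAbs]
    rcases hsign with ⟨h1, h2, h3⟩ | ⟨h1, h2, h3⟩
    · rw [abs_of_pos h1, abs_of_pos h2, abs_of_pos h3, hDp, hDq, hDr]; ring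
    · rw [abs_of_neg h1, abs_of_neg h2, abs_of_neg h3, hDp, hDq, hDr]; ring
  have absV : (Dp.natAbs : ℤ) * v p + (Dq.natAbs : ℤ) * v q + (Dr.natAbs : ℤ) * v r = 0 := by
    rw [Int.natCast_natAbs, Int.natCast_natAbs, Int.natCast_natAbs]
    rcases hsign with ⟨h1, h2, h3⟩ | ⟨h1, h2, h3⟩
    · rw [abs_of_pos h1, abs_of_pos h2, abs_of_pos h3, hDp, hDq, hDr]; ring
    · rw [abs_of_neg h1, abs_of_neg h2, abs_of_neg h3, hDp, hDq, hDr]; ring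
  have hDp0 : Dp ≠ 0 := by rcases hsign with ⟨h1, _, _⟩ | ⟨h1, _, _⟩ <;> omega
  have hDq0 : Dq ≠ 0 := by rcases hsign with ⟨_, h2, _⟩ | ⟨_, h2, _⟩ <;> omega
  have hDr0 : Dr ≠ 0 := by rcases hsign with ⟨_, _, h3⟩ | ⟨_, _, h3⟩ <;> omega
  refine goal_of n ?_ ?_ ?_ ?_ ?_ ?_
  · intro h
    have : n p = 0 := by rw [h]; rfl
    rw [hnp] at this
    exact hDp0 (Int.natAbs_eq_zero.1 this)
  · rw [sum_three hpq hpr hqr _ (fun i h1 h2 h3 => by rw [hn0 i h1 h2 h3]; simp)]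
    rw [hnp, hnq, hnr]
    have h' : (((Dp.natAbs : ℤ) * u p + (Dq.natAbs : ℤ) * u q + (Dr.natAbs : ℤ) * u r : ℤ) : ℚ)
        = 0 := by rw [absU]; norm_num
    have castAbs : ∀ x : ℤ, ((x.natAbs : ℚ)) = |(x : ℚ)| := by
      intro x; rw [Nat.cast_natAbs]; push_cast; ring
    push_cast at h' ⊢
    rw [castAbs, castAbs, castAbs]
    linarith [h']
  · rw [sum_three hpq hpr hqr _ (fun i h1 h2 h3 => by rw [hn0 i h1 h2 h3]; simp)]
    rw [hnp, hnq, hnr]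
    have h' : (((Dp.natAbs : ℤ) * v p + (Dq.natAbs : ℤ) * v q + (Dr.natAbs : ℤ) * v r : ℤ) : ℚ)
        = 0 := by rw [absV]; norm_num
    have castAbs : ∀ x : ℤ, ((x.natAbs : ℚ)) = |(x : ℚ)| := by
      intro x; rw [Nat.cast_natAbs]; push_cast; ring
    push_cast at h' ⊢
    rw [castAbs, castAbs, castAbs]
    linarith [h']
  · intro i
    have hb1 : (Dp.natAbs : ℤ) ≤ 2 * M ^ 2 := by
      rw [Int.natCast_natAbs, hDp]; exact det_bound (hu q) (hv r) (hu r) (hv q)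
    have hb2 : (Dq.natAbs : ℤ) ≤ 2 * M ^ 2 := by
      rw [Int.natCast_natAbs, hDq]; exact det_bound (hu r) (hv p) (hu p) (hv r)
    have hb3 : (Dr.natAbs : ℤ) ≤ 2 * M ^ 2 := by
      rw [Int.natCast_natAbs, hDr]; exact det_bound (hu p) (hv q) (hu q) (hv p)
    by_cases h1 : i = p
    · subst h1; rw [hnp]; exact hb1
    · by_cases h2 : i = q
      · subst h2; rw [hnq]; exact hb2
      · by_cases h3 : i = r
        · subst h3; rw [hnr]; exact hb3
        · rw [hn0 i h1 h2 h3]; positivity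
  · have hsub : Finset.univ.filter (fun i => n i ≠ 0) ⊆ ({p, q, r} : Finset (Fin d)) := by
      intro x hx
      simp only [Finset.mem_filter, Finset.mem_univ, true_and] at hx
      by_contra hmem
      simp only [Finset.mem_insert, Finset.mem_singleton] at hmem
      push_neg at hmem
      exact hx (hn0 x hmem.1 hmem.2.1 hmem.2.2)
    refine le_trans (Finset.card_le_card hsub) ?_
    refine le_trans (Finset.card_insert_le _ _) ?_
    have h1 := Finset.card_insert_le q ({r} : Finset (Fin d))
    simp only [Finset.card_singleton] at h1
    omega
  · intro i hni
    by_cases h1 : i = p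
    · subst h1
      by_contra hcon
      push_neg at hcon
      apply hDr0
      rw [hDr, hcon.1, hcon.2]; ring
    · by_cases h2 : i = q
      · subst h2
        by_contra hcon
        push_neg at hcon
        apply hDp0
        rw [hDp, hcon.1, hcon.2]; ring
      · by_cases h3 : i = r
        · subst h3
          by_contra hcon
          push_neg at hcon
          apply hDq0
          rw [hDq, hcon.1, hcon.2]; ring
        · exact absurd (hn0 i h1 h2 h3) hni

lemma twoGoal {d : ℕ} {u v : Fin d → ℤ} {M : ℤ}
    (hu : ∀ i, |u i| ≤ M) (hv : ∀ i, |v i| ≤ M) (hM : 1 ≤ M)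
    {p q : Fin d} (hpq : p ≠ q) {cp cq : ℚ} (hcp : 0 < cp) (hcq : 0 < cq)
    (hrq : u q ≠ 0 ∨ v q ≠ 0)
    (hU : cp * (u p : ℚ) + cq * (u q : ℚ) = 0)
    (hV : cp * (v p : ℚ) + cq * (v q : ℚ) = 0) :
    Goal d u v M := by
  have hl : -(cp / cq) < 0 := by
    have : 0 < cp / cq := div_pos hcp hcq
    linarith
  refine pairGoal hu hv hM hpq hl ?_ ?_ hrq
  · have hcq' : cq ≠ 0 := ne_of_gt hcq
    field_simp
    linarith [hU]
  · have hcq' : cq ≠ 0 := ne_of_gt hcq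
    field_simp
    linarith [hV]

lemma threeGoal {d : ℕ} {u v : Fin d → ℤ} {M : ℤ}
    (hu : ∀ i, |u i| ≤ M) (hv : ∀ i, |v i| ≤ M) (hM : 1 ≤ M)
    {p q r : Fin d} (hpq : p ≠ q) (hpr : p ≠ r) (hqr : q ≠ r)
    (hrp : u p ≠ 0 ∨ v p ≠ 0) (hrq : u q ≠ 0 ∨ v q ≠ 0) (hrr : u r ≠ 0 ∨ v r ≠ 0)
    {cp cq cr : ℚ} (hcp : 0 < cp) (hcq : 0 < cq) (hcr : 0 < cr)
    (hU : cp * (u p : ℚ) + cq * (u q : ℚ) + cr * (u r : ℚ) = 0)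
    (hV : cp * (v p : ℚ) + cq * (v q : ℚ) + cr * (v r : ℚ) = 0) :
    Goal d u v M := by
  classical
  by_cases hDr : (u p : ℚ) * (v q : ℚ) - (u q : ℚ) * (v p : ℚ) = 0
  · -- rows p and q are collinear
    have hrowp : rows u v p ≠ 0 := by
      rw [Ne, rows_eq_zero_iff]; rintro ⟨h1, h2⟩; rcases hrp with h | h <;> tauto
    have hcrs : cross (rows u v p) (rows u v q) = 0 := by
      simp only [cross, rows, Matrix.cons_val_zero, Matrix.cons_val_one, Matrix.head_cons]
      linarith [hDr]
    obtain ⟨l, hlq⟩ := colin hcrs hrowp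
    have huq : (u q : ℚ) = l * (u p : ℚ) := by
      have := congrFun hlq 0
      simpa [rows] using this
    have hvq : (v q : ℚ) = l * (v p : ℚ) := by
      have := congrFun hlq 1
      simpa [rows] using this
    have hl0 : l ≠ 0 := by
      rintro rfl
      simp at huq hvq
      rcases hrq with h | h
      · exact h (by exact_mod_cast huq)
      · exact h (by exact_mod_cast hvq)
    rcases lt_or_gt_of_ne hl0 with hl | hl
    · exact pairGoal hu hv hM hpq hl huq hvq hrq
    · refine twoGoal hu hv hM hpr (by positivity : (0:ℚ) < cp + cq * l) hcr hrr ?_ ?_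
      · linear_combination hU - cq * huq
      · linear_combination hV - cq * hvq
  · have e1 : cp * ((u p : ℚ) * v q - (u q : ℚ) * v p) =
        cr * ((u q : ℚ) * v r - (u r : ℚ) * v q) := by
      linear_combination (v q : ℚ) * hU - (u q : ℚ) * hV
    have e2 : cq * ((u p : ℚ) * v q - (u q : ℚ) * v p) =
        cr * ((u r : ℚ) * v p - (u p : ℚ) * v r) := by
      linear_combination (u p : ℚ) * hV - (v p : ℚ) * hU
    rcases lt_or_gt_of_ne hDr with hneg | hpos
    · refine tripleGoal hu hv hM hpq hpr hqr (Or.inr ⟨?_, ?_, ?_⟩)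
      · have : ((u q * v r - u r * v q : ℤ) : ℚ) < 0 := by push_cast; nlinarith
        exact_mod_cast this
      · have : ((u r * v p - u p * v r : ℤ) : ℚ) < 0 := by push_cast; nlinarith
        exact_mod_cast this
      · have : ((u p * v q - u q * v p : ℤ) : ℚ) < 0 := by push_cast; nlinarith
        exact_mod_cast this
    · refine tripleGoal hu hv hM hpq hpr hqr (Or.inl ⟨?_, ?_, ?_⟩)
      · have : (0:ℚ) < ((u q * v r - u r * v q : ℤ) : ℚ) := by push_cast; nlinarith
        exact_mod_cast this
      · have : (0:ℚ) < ((u r * v p - u p * v r : ℤ) : ℚ) := by push_cast; nlinarith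
        exact_mod_cast this
      · have : (0:ℚ) < ((u p * v q - u q * v p : ℤ) : ℚ) := by push_cast; nlinarith
        exact_mod_cast this

lemma onePos {c : ℚ} (hc : 0 < c) {x y : ℤ} (hx : c * (x:ℚ) = 0) (hy : c * (y:ℚ) = 0)
    (h : x ≠ 0 ∨ y ≠ 0) : False := by
  have hc' : c ≠ 0 := ne_of_gt hc
  rcases h with h | h
  · exact h (by exact_mod_cast (mul_eq_zero.1 hx).resolve_left hc')
  · exact h (by exact_mod_cast (mul_eq_zero.1 hy).resolve_left hc')

lemma comboGoal {d : ℕ} {u v : Fin d → ℤ} {M : ℤ}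
    (hu : ∀ i, |u i| ≤ M) (hv : ∀ i, |v i| ≤ M) (hM : 1 ≤ M)
    (i j k : Fin d)
    (hri : u i ≠ 0 ∨ v i ≠ 0) (hrj : u j ≠ 0 ∨ v j ≠ 0) (hrk : u k ≠ 0 ∨ v k ≠ 0)
    {s t w : ℚ} (hs : 0 ≤ s) (ht : 0 ≤ t) (hw : 0 ≤ w)
    (hU : s * (u i : ℚ) + t * (u j : ℚ) + w * (u k : ℚ) = 0)
    (hV : s * (v i : ℚ) + t * (v j : ℚ) + w * (v k : ℚ) = 0)
    (hnz : ¬(s = 0 ∧ t = 0 ∧ w = 0)) : Goal d u v M := by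
  classical
  rcases eq_or_lt_of_le hs with hs0 | hs0
  · subst hs0
    rcases eq_or_lt_of_le ht with ht0 | ht0
    · subst ht0
      rcases eq_or_lt_of_le hw with hw0 | hw0
      · exact absurd ⟨rfl, rfl, hw0.symm⟩ hnz
      · exact absurd (onePos hw0 (by linear_combination hU) (by linear_combination hV) hrk) id
    · rcases eq_or_lt_of_le hw with hw0 | hw0
      · subst hw0
        exact absurd (onePos ht0 (by linear_combination hU) (by linear_combination hV) hrj) id
      · by_cases hjk : j = k
        · subst hjk
          exact absurd (onePos (by linarith : (0:ℚ) < t + w)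
            (by linear_combination hU) (by linear_combination hV) hrj) id
        · exact twoGoal hu hv hM hjk ht0 hw0 hrk
            (by linear_combination hU) (by linear_combination hV)
  · rcases eq_or_lt_of_le ht with ht0 | ht0
    · subst ht0
      rcases eq_or_lt_of_le hw with hw0 | hw0
      · subst hw0
        exact absurd (onePos hs0 (by linear_combination hU) (by linear_combination hV) hri) id
      · by_cases hik : i = k
        · subst hik
          exact absurd (onePos (by linarith : (0:ℚ) < s + w)
            (by linear_combination hU) (by linear_combination hV) hri) id
        · exact twoGoal hu hv hM hik hs0 hw0 hrk
            (by linear_combination hU) (by linear_combination hV)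
    · rcases eq_or_lt_of_le hw with hw0 | hw0
      · subst hw0
        by_cases hij : i = j
        · subst hij
          exact absurd (onePos (by linarith : (0:ℚ) < s + t)
            (by linear_combination hU) (by linear_combination hV) hri) id
        · exact twoGoal hu hv hM hij hs0 ht0 hrj
            (by linear_combination hU) (by linear_combination hV)
      · by_cases hij : i = j
        · subst hij
          by_cases hik : i = k
          · subst hik
            exact absurd (onePos (by linarith : (0:ℚ) < s + t + w)
              (by linear_combination hU) (by linear_combination hV) hri) id
          · exact twoGoal hu hv hM hik (by linarith : (0:ℚ) < s + t) hw0 hrk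
              (by linear_combination hU) (by linear_combination hV)
        · by_cases hik : i = k
          · subst hik
            exact twoGoal hu hv hM hij (by linarith : (0:ℚ) < s + w) ht0 hrj
              (by linear_combination hU) (by linear_combination hV)
          · by_cases hjk : j = k
            · subst hjk
              exact twoGoal hu hv hM hij hs0 (by linarith : (0:ℚ) < t + w) hrj
                (by linear_combination hU) (by linear_combination hV)
            · exact threeGoal hu hv hM hij hik hjk hri hrj hrk hs0 ht0 hw0 hU hV

end S5
namespace S5

lemma indLem {d : ℕ} (u v : Fin d → ℤ) (i0 : Fin d) (T : Finset (Fin d)) :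
    (∃ i j : Fin d, ∀ ℓ ∈ T, rows u v ℓ ∈ cone2 (rows u v i) (rows u v j)) ∨
    (∃ i j k : Fin d, rows u v i ≠ 0 ∧ rows u v j ≠ 0 ∧ rows u v k ≠ 0 ∧
      ∃ s t w : ℚ, 0 ≤ s ∧ 0 ≤ t ∧ 0 ≤ w ∧
        s • rows u v i + t • rows u v j + w • rows u v k = 0 ∧
        ¬(s = 0 ∧ t = 0 ∧ w = 0)) := by
  classical
  induction T using Finset.induction_on with
  | empty => exact Or.inl ⟨i0, i0, fun ℓ h => absurd h (Finset.notMem_empty ℓ)⟩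
  | @insert a T ha IH =>
    rcases IH with ⟨p, q, hpq⟩ | hQ
    · by_cases hra : rows u v a ∈ cone2 (rows u v p) (rows u v q)
      · left
        refine ⟨p, q, fun ℓ hℓ => ?_⟩
        rcases Finset.mem_insert.1 hℓ with rfl | hℓ
        · exact hra
        · exact hpq ℓ hℓ
      · have ha0 : rows u v a ≠ 0 := fun h => hra (h ▸ c2_zero _ _)
        by_cases hp0 : rows u v p = 0
        · left
          refine ⟨q, a, fun ℓ hℓ => ?_⟩
          rcases Finset.mem_insert.1 hℓ with rfl | hℓ
          · exact c2_right _ _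
          · exact c2_trans (hpq ℓ hℓ) (hp0 ▸ c2_zero _ _) (c2_left _ _)
        · by_cases hq0 : rows u v q = 0
          · left
            refine ⟨p, a, fun ℓ hℓ => ?_⟩
            rcases Finset.mem_insert.1 hℓ with rfl | hℓ
            · exact c2_right _ _
            · exact c2_trans (hpq ℓ hℓ) (c2_left _ _) (hq0 ▸ c2_zero _ _)
          · rcases lemA (rows u v p) (rows u v q) (rows u v a) hp0 with hcombo | hc | hp | hq2
            · right
              exact ⟨p, q, a, hp0, hq0, ha0, hcombo⟩
            · exact absurd hc hra
            · left
              refine ⟨q, a, fun ℓ hℓ => ?_⟩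
              rcases Finset.mem_insert.1 hℓ with rfl | hℓ
              · exact c2_right _ _
              · exact c2_trans (hpq ℓ hℓ) hp (c2_left _ _)
            · left
              refine ⟨p, a, fun ℓ hℓ => ?_⟩
              rcases Finset.mem_insert.1 hℓ with rfl | hℓ
              · exact c2_right _ _
              · exact c2_trans (hpq ℓ hℓ) (c2_left _ _) hq2
    · exact Or.inr hQ

end S5


theorem stmt5 (d : ℕ) (u v : Fin d → ℤ) (M : ℤ)
    (hind : LinearIndependent ℚ ![coeVec u, coeVec v])
    (hnp : ¬ projective (coeVec u) (coeVec v))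
    (hu : ∀ i, |u i| ≤ M) (hv : ∀ i, |v i| ≤ M) :
    ∃ n : Fin d → ℕ, n ≠ 0 ∧
      (∀ w ∈ Submodule.span ℚ ({coeVec u, coeVec v} : Set (Fin d → ℚ)),
        ∑ i, (n i : ℚ) * w i = 0) ∧
      (∀ i, (n i : ℤ) ≤ 2 * M ^ 2) ∧
      (Finset.univ.filter (fun i => n i ≠ 0)).card ≤ 3 ∧
      (∀ i, n i ≠ 0 →
        ∃ w ∈ Submodule.span ℚ ({coeVec u, coeVec v} : Set (Fin d → ℚ)), w i ≠ 0) := by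
  classical
  have hu0 : coeVec u ≠ 0 := by
    have h := hind.ne_zero 0
    simpa using h
  obtain ⟨i0, hi0⟩ : ∃ i, u i ≠ 0 := by
    by_contra h
    push_neg at h
    exact hu0 (funext fun i => by simp [coeVec, h i])
  have hM : 1 ≤ M := le_trans (Int.one_le_abs hi0) (hu i0)
  rcases S5.indLem u v i0 Finset.univ with ⟨i, j, hij⟩ |
    ⟨i, j, k, hri, hrj, hrk, s, t, w, hs, ht, hw, hsum, hnz⟩
  · exfalso
    apply hnp
    refine ⟨i, j, ?_⟩
    have hrange : ∀ ℓ : Fin d, (![coeVec u ℓ, coeVec v ℓ] : Fin 2 → ℚ) = S5.rows u v ℓ :=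
      fun ℓ => rfl
    have e1 : cone (Set.range fun ℓ => (![coeVec u ℓ, coeVec v ℓ] : Fin 2 → ℚ)) ⊆
        S5.cone2 (S5.rows u v i) (S5.rows u v j) := by
      apply S5.cone_subset_c2
      rintro x ⟨ℓ, rfl⟩
      exact hij ℓ (Finset.mem_univ ℓ)
    have e2 : S5.cone2 (S5.rows u v i) (S5.rows u v j) ⊆
        cone ({![coeVec u i, coeVec v i], ![coeVec u j, coeVec v j]} : Set (Fin 2 → ℚ)) :=
      S5.c2_subset_cone (Set.mem_insert _ _) (Set.mem_insert_iff.2 (Or.inr rfl))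
    have e3 : cone ({![coeVec u i, coeVec v i], ![coeVec u j, coeVec v j]} : Set (Fin 2 → ℚ)) ⊆
        S5.cone2 (S5.rows u v i) (S5.rows u v j) := by
      apply S5.cone_subset_c2
      rintro x hx
      rcases Set.mem_insert_iff.1 hx with rfl | hx
      · exact S5.c2_left _ _
      · rw [Set.mem_singleton_iff.1 hx]
        exact S5.c2_right _ _
    have e4 : S5.cone2 (S5.rows u v i) (S5.rows u v j) ⊆
        cone (Set.range fun ℓ => (![coeVec u ℓ, coeVec v ℓ] : Fin 2 → ℚ)) :=
      S5.c2_subset_cone ⟨i, rfl⟩ ⟨j, rfl⟩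
    exact Set.Subset.antisymm (e1.trans e2) (e3.trans e4)
  · have h0 := congrFun hsum 0
    have h1 := congrFun hsum 1
    simp only [S5.rows, Pi.add_apply, Pi.smul_apply, smul_eq_mul, Matrix.cons_val_zero,
      Matrix.cons_val_one, Matrix.head_cons, Pi.zero_apply] at h0 h1
    have hri' : u i ≠ 0 ∨ v i ≠ 0 := by
      by_contra h; push_neg at h; exact hri (S5.rows_eq_zero_iff.2 h)
    have hrj' : u j ≠ 0 ∨ v j ≠ 0 := by
      by_contra h; push_neg at h; exact hrj (S5.rows_eq_zero_iff.2 h)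
    have hrk' : u k ≠ 0 ∨ v k ≠ 0 := by
      by_contra h; push_neg at h; exact hrk (S5.rows_eq_zero_iff.2 h)
    exact S5.comboGoal hu hv hM i j k hri' hrj' hrk' hs ht hw h0 h1 hnz
end

section
/- Define the fast-growing functions F₀(x) = x + 1 and F_{k+1}(x) = F_k^{x+1}(x) (the (x+1)-fold iterate of F_k applied to x). Define sequences H₀ = 0, L₀ = M, H_{i+1} = U + L_i·M, L_{i+1} = M·(H_{i+1})^{i+1} + L_i, for fixed integers U, M ≥ 1. Then for all d ≥ 0: H_d ≤ (4UM²)^{d!} and L_d ≤ (4UM²)^{(d+1)!}. -/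
/-- The fast-growing functions: `Fgrow 0 x = x + 1`, `Fgrow (k+1) x = (Fgrow k)^[x+1] x`. -/
def Fgrow : ℕ → ℕ → ℕ
  | 0, x => x + 1
  | k + 1, x => (Fgrow k)^[x + 1] x

/-- `HL U M d = (H_d, L_d)` with `H_0 = 0`, `L_0 = M`, `H_{i+1} = U + L_i·M`,
`L_{i+1} = M·(H_{i+1})^{i+1} + L_i`. -/
def HL (U M : ℕ) : ℕ → ℕ × ℕ
  | 0 => (0, M)
  | i + 1 => (U + (HL U M i).2 * M, M * (U + (HL U M i).2 * M) ^ (i + 1) + (HL U M i).2)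

theorem stmt8 (U M : ℕ) (hU : 1 ≤ U) (hM : 1 ≤ M) (d : ℕ) :
    (HL U M d).1 ≤ (4 * U * M ^ 2) ^ (Nat.factorial d) ∧
    (HL U M d).2 ≤ (4 * U * M ^ 2) ^ (Nat.factorial (d + 1)) := by
  set B := 4 * U * M ^ 2 with hBdef
  have hB : 1 ≤ B := by
    rw [hBdef]; exact Nat.one_le_iff_ne_zero.mpr (by positivity)
  suffices h : (HL U M d).1 ≤ B ^ (Nat.factorial d) ∧
      M * (HL U M d).2 + U ≤ B ^ (Nat.factorial (d + 1)) by
    refine ⟨h.1, le_trans ?_ h.2⟩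
    nlinarith [(HL U M d).2.le_refl]
  induction d with
  | zero =>
    refine ⟨Nat.zero_le _, ?_⟩
    show M * M + U ≤ B ^ Nat.factorial 1
    rw [show Nat.factorial 1 = 1 from rfl, pow_one, hBdef]
    nlinarith [Nat.mul_le_mul_right (M * M) hU, Nat.mul_le_mul_left U hM]
  | succ d ih =>
    obtain ⟨ih1, ih2⟩ := ih
    set L := (HL U M d).2 with hL
    have hHL : HL U M (d + 1) = (U + L * M, M * (U + L * M) ^ (d + 1) + L) := rfl
    rw [hHL]
    have hH : U + L * M ≤ B ^ Nat.factorial (d + 1) := by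
      calc U + L * M = M * L + U := by ring
        _ ≤ B ^ Nat.factorial (d + 1) := ih2
    constructor
    · exact hH
    · have hH1 : 1 ≤ U + L * M := le_trans hU (Nat.le_add_right _ _)
      have key : M * (M * (U + L * M) ^ (d + 1) + L) + U ≤
          2 * M ^ 2 * (U + L * M) ^ (d + 1) := by
        have h1 : U + L * M ≤ (U + L * M) ^ (d + 1) := Nat.le_self_pow (by omega) _
        have h2 : (U + L * M) ^ (d + 1) ≤ M ^ 2 * (U + L * M) ^ (d + 1) :=
          Nat.le_mul_of_pos_left _ (by positivity)
        nlinarith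
      have h2M : 2 * M ^ 2 ≤ B ^ Nat.factorial (d + 1) := by
        calc 2 * M ^ 2 ≤ B := by
              rw [hBdef]; nlinarith [Nat.mul_le_mul_right (M ^ 2) hU]
          _ ≤ B ^ Nat.factorial (d + 1) := Nat.le_self_pow (Nat.factorial_ne_zero _) _
      have hpow : (U + L * M) ^ (d + 1) ≤ (B ^ Nat.factorial (d + 1)) ^ (d + 1) :=
        Nat.pow_le_pow_left hH _
      calc M * (M * (U + L * M) ^ (d + 1) + L) + U
          ≤ 2 * M ^ 2 * (U + L * M) ^ (d + 1) := key
        _ ≤ B ^ Nat.factorial (d + 1) * (B ^ Nat.factorial (d + 1)) ^ (d + 1) :=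
            Nat.mul_le_mul h2M hpow
        _ = B ^ (Nat.factorial (d + 1) * (d + 2)) := by
            rw [← pow_mul, ← pow_add]; ring_nf
        _ = B ^ Nat.factorial (d + 2) := by
            rw [Nat.factorial_succ (d + 1)]; ring_nf
end

section
/- Let m, n ∈ ℕ and b ∈ ℤ. Define M ⊆ ℕ² by: M = {(0,0)} if b ≥ 0; M = {(⌈-b/m⌉, 0)} if b < 0, n = 0, m > 0; M = {(0, ⌈-b/n⌉)} if b < 0, n > 0, m = 0; M = {(i, ⌈-(b + m·i)/n⌉) : 0 ≤ i ≤ ⌈-b/m⌉} if b < 0, m > 0, n > 0; and M = ∅ if b < 0, m = n = 0. Then for all x, y ∈ ℕ: m·x + n·y + b ≥ 0 if and only if there exists (a, c) ∈ M with x ≥ a and y ≥ c. -/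
/-- The set of minimal points of `{(x,y) ∈ ℕ² : m·x + n·y + b ≥ 0}`. -/
def Mset (m n : ℕ) (b : ℤ) : Set (ℕ × ℕ) :=
  if 0 ≤ b then {(0, 0)}
  else if 0 < m ∧ n = 0 then {((⌈(-b : ℚ) / (m : ℚ)⌉).toNat, 0)}
  else if m = 0 ∧ 0 < n then {(0, (⌈(-b : ℚ) / (n : ℚ)⌉).toNat)}
  else if 0 < m ∧ 0 < n then
    {p | ∃ i : ℕ, i ≤ (⌈(-b : ℚ) / (m : ℚ)⌉).toNat ∧
      p = (i, (⌈((-(b + (m : ℤ) * i) : ℤ) : ℚ) / (n : ℚ)⌉).toNat)}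
  else ∅


lemma ceil_key {n : ℕ} (hn : 0 < n) (c : ℤ) (y : ℕ) :
    (⌈((-c : ℤ) : ℚ) / (n : ℚ)⌉).toNat ≤ y ↔ 0 ≤ (n : ℤ) * y + c := by
  have hn' : (0:ℚ) < (n:ℚ) := by exact_mod_cast hn
  rw [Int.toNat_le, Int.ceil_le, div_le_iff₀ hn']
  rw [show ((y : ℤ) : ℚ) * (n:ℚ) = (((y : ℤ) * n : ℤ) : ℚ) by push_cast; ring]
  rw [Int.cast_le]
  constructor <;> intro h <;> linarith

lemma ceil_key' {n : ℕ} (hn : 0 < n) (c : ℤ) (y : ℕ) :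
    (⌈(-(c : ℚ)) / (n : ℚ)⌉).toNat ≤ y ↔ 0 ≤ (n : ℤ) * y + c := by
  rw [show (-(c:ℚ)) = ((-c : ℤ) : ℚ) by push_cast; ring]
  exact ceil_key hn c y

theorem stmt9 (m n : ℕ) (b : ℤ) (x y : ℕ) :
    0 ≤ (m : ℤ) * x + (n : ℤ) * y + b ↔
      ∃ p ∈ Mset m n b, p.1 ≤ x ∧ p.2 ≤ y := by
  unfold Mset
  split_ifs with h1 h2 h3 h4
  · simp only [Set.mem_singleton_iff]
    constructor
    · intro _; exact ⟨(0,0), rfl, Nat.zero_le _, Nat.zero_le _⟩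
    · intro _; positivity
  · obtain ⟨hm, hn0⟩ := h2
    simp only [Set.mem_singleton_iff]
    constructor
    · intro h
      refine ⟨_, rfl, ?_, Nat.zero_le _⟩
      rw [ceil_key' hm b x]
      simp [hn0] at h; linarith
    · rintro ⟨p, rfl, hx, -⟩
      rw [ceil_key' hm b x] at hx
      simp [hn0]; linarith
  · obtain ⟨hm0, hn⟩ := h3
    simp only [Set.mem_singleton_iff]
    constructor
    · intro h
      refine ⟨_, rfl, Nat.zero_le _, ?_⟩
      rw [ceil_key' hn b y]
      simp [hm0] at h; linarith
    · rintro ⟨p, rfl, -, hy⟩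
      rw [ceil_key' hn b y] at hy
      simp [hm0]; linarith
  · obtain ⟨hm, hn⟩ := h4
    constructor
    · intro h
      set A := (⌈(-(b:ℚ)) / (m : ℚ)⌉).toNat with hA
      refine ⟨(min x A, (⌈((-(b + (m : ℤ) * (min x A)) : ℤ) : ℚ) / (n : ℚ)⌉).toNat),
        ⟨min x A, min_le_right _ _, rfl⟩, min_le_left _ _, ?_⟩
      rw [show ((-(b + (m : ℤ) * (min x A)) : ℤ) : ℚ) = -(((b + (m : ℤ) * (min x A)) : ℤ) : ℚ) by push_cast; ring]
      rw [ceil_key' hn (b + (m : ℤ) * (min x A)) y]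
      rcases le_or_gt x A with hxa | hxa
      · rw [min_eq_left hxa]; linarith
      · rw [min_eq_right hxa.le]
        have : A ≤ A := le_refl A
        rw [hA, ceil_key' hm b A] at this
        have hny : 0 ≤ (n:ℤ) * y := by positivity
        linarith
    · rintro ⟨p, ⟨i, hiA, rfl⟩, hix, hiy⟩
      simp only at hix hiy
      rw [show ((-(b + (m : ℤ) * i) : ℤ) : ℚ) = -(((b + (m : ℤ) * i) : ℤ) : ℚ) by push_cast; ring] at hiy
      rw [ceil_key' hn (b + (m : ℤ) * i) y] at hiy
      have : (m:ℤ) * i ≤ (m:ℤ) * x := by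
        have : (i:ℤ) ≤ x := by exact_mod_cast hix
        exact mul_le_mul_of_nonneg_left this (by positivity)
      linarith
  · simp only [Set.mem_empty_iff_false, false_and, exists_false, iff_false]
    intro h
    have hm : m = 0 := by omega
    have hn : n = 0 := by omega
    simp [hm, hn] at h; omega
end

section
/- Let X = span{u, v} ⊆ ℚ^d be 2-dimensional with I = {i, j} a sign-reflecting projection of X and c := u(i)v(j) − u(j)v(i) > 0, where u, v ∈ ℤ^d and ‖u‖, ‖v‖ ≤ S. Then there exist vectors ū, v̄ ∈ X ∩ ℕ^d (componentwise nonnegative integer vectors in X) such that ū(i) = c, ū(j) = 0, v̄(i) = 0, v̄(j) = c, and ‖ū‖, ‖v̄‖ ≤ 2S². -/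
theorem stmt11 (d : ℕ) (u v : Fin d → ℤ) (S : ℤ)
    (hind : LinearIndependent ℚ ![coeVec u, coeVec v])
    (i j : Fin d) (hij : i ≠ j)
    (hsr : ∀ x : Fin d → ℚ,
      x ∈ Submodule.span ℚ ({coeVec u, coeVec v} : Set (Fin d → ℚ)) →
      0 ≤ x i → 0 ≤ x j → ∀ ℓ, 0 ≤ x ℓ)
    (hc : 0 < u i * v j - u j * v i)
    (hu : ∀ ℓ, |u ℓ| ≤ S) (hv : ∀ ℓ, |v ℓ| ≤ S) :
    ∃ ub vb : Fin d → ℤ,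
      (∀ ℓ, 0 ≤ ub ℓ) ∧ (∀ ℓ, 0 ≤ vb ℓ) ∧
      coeVec ub ∈ Submodule.span ℚ ({coeVec u, coeVec v} : Set (Fin d → ℚ)) ∧
      coeVec vb ∈ Submodule.span ℚ ({coeVec u, coeVec v} : Set (Fin d → ℚ)) ∧
      ub i = u i * v j - u j * v i ∧ ub j = 0 ∧
      vb i = 0 ∧ vb j = u i * v j - u j * v i ∧
      (∀ ℓ, |ub ℓ| ≤ 2 * S ^ 2) ∧ (∀ ℓ, |vb ℓ| ≤ 2 * S ^ 2) := by
  set ub : Fin d → ℤ := fun ℓ => v j * u ℓ - u j * v ℓ with hub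
  set vb : Fin d → ℤ := fun ℓ => u i * v ℓ - v i * u ℓ with hvb
  have hmemu : coeVec u ∈ Submodule.span ℚ ({coeVec u, coeVec v} : Set (Fin d → ℚ)) :=
    Submodule.subset_span (by simp)
  have hmemv : coeVec v ∈ Submodule.span ℚ ({coeVec u, coeVec v} : Set (Fin d → ℚ)) :=
    Submodule.subset_span (by simp)
  have hcoe_ub : coeVec ub = ((v j : ℚ)) • coeVec u - ((u j : ℚ)) • coeVec v := by
    funext ℓ; simp only [coeVec, hub, Pi.sub_apply, Pi.smul_apply, smul_eq_mul]; push_cast; ring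
  have hcoe_vb : coeVec vb = ((u i : ℚ)) • coeVec v - ((v i : ℚ)) • coeVec u := by
    funext ℓ; simp only [coeVec, hvb, Pi.sub_apply, Pi.smul_apply, smul_eq_mul]; push_cast; ring
  have hub_mem : coeVec ub ∈ Submodule.span ℚ ({coeVec u, coeVec v} : Set (Fin d → ℚ)) := by
    rw [hcoe_ub]
    exact Submodule.sub_mem _ (Submodule.smul_mem _ _ hmemu) (Submodule.smul_mem _ _ hmemv)
  have hvb_mem : coeVec vb ∈ Submodule.span ℚ ({coeVec u, coeVec v} : Set (Fin d → ℚ)) := by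
    rw [hcoe_vb]
    exact Submodule.sub_mem _ (Submodule.smul_mem _ _ hmemv) (Submodule.smul_mem _ _ hmemu)
  have hubi : ub i = u i * v j - u j * v i := by simp [hub]; ring
  have hubj : ub j = 0 := by simp [hub]; ring
  have hvbi : vb i = 0 := by simp [hvb]; ring
  have hvbj : vb j = u i * v j - u j * v i := by simp [hvb]; ring
  have hub_nn : ∀ ℓ, 0 ≤ ub ℓ := by
    intro ℓ
    have h1 : (0:ℤ) ≤ ub i := hubi ▸ hc.le
    have h2 : (0:ℤ) ≤ ub j := hubj.ge
    have h3 := hsr (coeVec ub) hub_mem (by show (0:ℚ) ≤ (_ : ℤ); exact_mod_cast h1) (by show (0:ℚ) ≤ (_ : ℤ); exact_mod_cast h2) ℓ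
    have h4 : (0:ℚ) ≤ (ub ℓ : ℚ) := h3
    exact_mod_cast h4
  have hvb_nn : ∀ ℓ, 0 ≤ vb ℓ := by
    intro ℓ
    have h1 : (0:ℤ) ≤ vb i := hvbi.ge
    have h2 : (0:ℤ) ≤ vb j := hvbj ▸ hc.le
    have h3 := hsr (coeVec vb) hvb_mem (by show (0:ℚ) ≤ (_ : ℤ); exact_mod_cast h1) (by show (0:ℚ) ≤ (_ : ℤ); exact_mod_cast h2) ℓ
    have h4 : (0:ℚ) ≤ (vb ℓ : ℚ) := h3
    exact_mod_cast h4
  have hS : 0 ≤ S := le_trans (abs_nonneg _) (hu i)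
  have hbound : ∀ (a b : ℤ) (f g : Fin d → ℤ), (∀ ℓ, |f ℓ| ≤ S) → (∀ ℓ, |g ℓ| ≤ S) →
      |a| ≤ S → |b| ≤ S → ∀ ℓ, |a * f ℓ - b * g ℓ| ≤ 2 * S ^ 2 := by
    intro a b f g hf hg ha hb ℓ
    calc |a * f ℓ - b * g ℓ| ≤ |a * f ℓ| + |b * g ℓ| := abs_sub _ _
      _ = |a| * |f ℓ| + |b| * |g ℓ| := by rw [abs_mul, abs_mul]
      _ ≤ S * S + S * S := by
          gcongr <;> first | exact ha | exact hb | exact hf ℓ | exact hg ℓ |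
            exact le_trans (abs_nonneg _) ha | exact le_trans (abs_nonneg _) hb
      _ = 2 * S ^ 2 := by ring
  exact ⟨ub, vb, hub_nn, hvb_nn, hub_mem, hvb_mem, hubi, hubj, hvbi, hvbj,
    hbound _ _ _ _ hu hv (hv j) (hu j), hbound _ _ _ _ hv hu (hu i) (hv i)⟩
end
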